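/- arXiv:2604.00335 — 2 statements merged into one kernel-verified Lean document; each statement's English description precedes it below -/
import Mathlib

section
/- Let G be a finite group, O a disklike transfer system on G, and M the maximal compatible transfer system of O. Then a transfer e = (K → H) ∈ O belongs to M if and only if for every transfer r ∈ O with r ≺ e (r is a cover in the restriction order), r belongs to M and r is a compatibility success for e, i.e., writing r = ((K ∩ I) → I), the membership (K ∩ I) → K ∈ O implies I → H ∈ O. -/
/-- A transfer system on a group `G`: a binary relation on subgroups refining
inclusion, which is reflexive, closed under conjugation, restriction, and
composition. -/
structure TransferSystem (G : Type*) [Group G] where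
  rel : Subgroup G → Subgroup G → Prop
  le_of_rel : ∀ {K H : Subgroup G}, rel K H → K ≤ H
  refl : ∀ H : Subgroup G, rel H H
  conj : ∀ {K H : Subgroup G} (g : G), rel K H →
    rel (K.map (MulAut.conj g).toMonoidHom) (H.map (MulAut.conj g).toMonoidHom)
  restrict : ∀ {K H : Subgroup G} (L : Subgroup G), rel K H → L ≤ H → rel (K ⊓ L) L
  comp : ∀ {L K H : Subgroup G}, rel L K → rel K H → rel L H

/-- The pair `(Oa, Om)` of transfer systems is compatible. -/
def TransferSystem.Compatible {G : Type*} [Group G] (Oa Om : TransferSystem G) : Prop :=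
  (∀ K H : Subgroup G, Om.rel K H → Oa.rel K H) ∧
  ∀ K J H : Subgroup G, J ≤ H → Om.rel K H → Oa.rel (K ⊓ J) K → Oa.rel J H

/-- `M` is the maximal compatible transfer system of `O`. -/
def TransferSystem.IsMaxCompatible {G : Type*} [Group G] (O M : TransferSystem G) : Prop :=
  O.Compatible M ∧
  ∀ Om : TransferSystem G, O.Compatible Om → ∀ K H : Subgroup G, Om.rel K H → M.rel K H

/-- `T` is the transfer system generated by the binary relation `B`, i.e. the
smallest transfer system containing `B`. -/
def TransferSystem.IsGeneratedBy {G : Type*} [Group G] (T : TransferSystem G)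
    (B : Subgroup G → Subgroup G → Prop) : Prop :=
  (∀ K H : Subgroup G, B K H → T.rel K H) ∧
  ∀ T' : TransferSystem G, (∀ K H : Subgroup G, B K H → T'.rel K H) →
    ∀ K H : Subgroup G, T.rel K H → T'.rel K H

/-- The single transfer `K → H` is compatible with `Oa`. -/
def TransferSystem.EdgeCompatible {G : Type*} [Group G] (Oa : TransferSystem G)
    (K H : Subgroup G) : Prop :=
  ∀ J : Subgroup G, J ≤ H → Oa.rel (K ⊓ J) K → Oa.rel J H

/-- A transfer system is saturated. -/
def TransferSystem.Saturated {G : Type*} [Group G] (O : TransferSystem G) : Prop :=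
  ∀ L K H : Subgroup G, L ≤ K → K ≤ H → O.rel L H → O.rel K H

/-- A transfer system is disklike: every transfer is a restriction of a
transfer to the full group. -/
def TransferSystem.Disklike {G : Type*} [Group G] (O : TransferSystem G) : Prop :=
  ∀ K H : Subgroup G, O.rel K H → ∃ L : Subgroup G, O.rel L ⊤ ∧ K = L ⊓ H

/-- `r` is a proper restriction of `e` in the restriction order on transfers,
viewed as pairs of subgroups. -/
def RestrLt {G : Type*} [Group G] (r e : Subgroup G × Subgroup G) : Prop :=
  ∃ I : Subgroup G, I < e.2 ∧ r = (e.1 ⊓ I, I)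

/-- `r ≺ e`: `r` is covered by `e` in the restriction order on transfers of `O`. -/
def RestrCovBy {G : Type*} [Group G] (O : TransferSystem G)
    (r e : Subgroup G × Subgroup G) : Prop :=
  RestrLt r e ∧
    ¬ ∃ q : Subgroup G × Subgroup G, O.rel q.1 q.2 ∧ RestrLt r q ∧ RestrLt q e

/-- The binary relation `p⁻¹O` on subgroups of `G`, for `O` a transfer system
on `G ⧸ N`. -/
def preimageRel {G : Type*} [Group G] (N : Subgroup G) [N.Normal]
    (O : TransferSystem (G ⧸ N)) : Subgroup G → Subgroup G → Prop :=
  fun A B => ∃ K H : Subgroup (G ⧸ N), O.rel K H ∧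
    A = Subgroup.comap (QuotientGroup.mk' N) K ∧ B = Subgroup.comap (QuotientGroup.mk' N) H

/-!
A transfer of `O` lies in the maximal compatible transfer system `M` exactly when all its
restrictions are edge compatible with `O`. For `e = (K → H)` the restrictions to proper
subgroups of `H` are controlled by `M` on the maximal subgroups of `H`, which are exactly the
covers of `e` in the restriction order. It remains to show that `K → H` itself is edge compatible,
i.e. that `(K ∩ J) → K ∈ O` forces `J → H ∈ O` for `J < H`. Choosing a maximal `I` with
`J ≤ I < H`, compatibility of `M` on `K ∩ I → I` gives `J → I ∈ O`. Since `O` is disklike this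
extends to a transfer `J' → H` with `J = J' ∩ I`: either `J' = H`, so `J = I` and the
compatibility success of the cover gives `J → H`, or `J' < H` and the same argument gives
`J → J'`, which composes with `J' → H`.
-/

namespace TransferSystem

variable {G : Type*} [Group G] {O M : TransferSystem G}

lemma rel_map_conj_iff (O : TransferSystem G) (g : G) {K H : Subgroup G} :
    O.rel (K.map (MulAut.conj g).toMonoidHom) (H.map (MulAut.conj g).toMonoidHom) ↔
      O.rel K H := by
  refine ⟨fun h => ?_, O.conj g⟩
  have map_conj_inv_map_conj (X : Subgroup G) :
      (X.map (MulAut.conj g).toMonoidHom).map (MulAut.conj g⁻¹).toMonoidHom = X := by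
    ext x; simp [Subgroup.mem_map, mul_assoc]
  simpa only [map_conj_inv_map_conj] using O.conj g⁻¹ h

lemma exists_eq_map_conj (g : G) (J : Subgroup G) :
    ∃ J₀ : Subgroup G, J = J₀.map (MulAut.conj g).toMonoidHom :=
  ⟨_, (Subgroup.map_comap_eq_self_of_surjective (MulAut.conj g).surjective J).symm⟩

lemma edgeCompatible_refl (O : TransferSystem G) (H : Subgroup G) : O.EdgeCompatible H H :=
  fun J hJ h => by rwa [inf_eq_right.2 hJ] at h

lemma EdgeCompatible.trans {A B C : Subgroup G} (hAB : A ≤ B) (h₁ : O.EdgeCompatible A B)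
    (h₂ : O.EdgeCompatible B C) : O.EdgeCompatible A C := by
  intro J hJ hAJ
  refine h₂ J hJ (h₁ (B ⊓ J) inf_le_left ?_)
  rwa [← inf_assoc, inf_eq_left.2 hAB]

lemma EdgeCompatible.map_conj {A B : Subgroup G} (h : O.EdgeCompatible A B) (g : G) :
    O.EdgeCompatible (A.map (MulAut.conj g).toMonoidHom) (B.map (MulAut.conj g).toMonoidHom) := by
  have hinj : Function.Injective (MulAut.conj g).toMonoidHom := (MulAut.conj g).injective
  intro J hJ hAJ
  obtain ⟨J, rfl⟩ := exists_eq_map_conj g J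
  rw [Subgroup.map_le_map_iff_of_injective hinj] at hJ
  rw [← Subgroup.map_inf _ _ _ hinj, rel_map_conj_iff] at hAJ
  exact O.conj g (h J hJ hAJ)

lemma Compatible.edgeCompatible (hOM : O.Compatible M) {A B : Subgroup G} (h : M.rel A B) :
    O.EdgeCompatible A B :=
  fun J hJ => hOM.2 A J B hJ h

def maxCompatible (O : TransferSystem G) : TransferSystem G where
  rel K H := O.rel K H ∧ ∀ I ≤ H, O.EdgeCompatible (K ⊓ I) I
  le_of_rel h := O.le_of_rel h.1
  refl H := ⟨O.refl H, fun I hI => by rw [inf_eq_right.2 hI]; exact O.edgeCompatible_refl I⟩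
  conj := by
    rintro K H g ⟨hO, hEC⟩
    refine ⟨O.conj g hO, fun I hI => ?_⟩
    obtain ⟨I, rfl⟩ := exists_eq_map_conj g I
    rw [Subgroup.map_le_map_iff_of_injective (MulAut.conj g).injective] at hI
    rw [← Subgroup.map_inf _ _ _ (MulAut.conj g).injective]
    exact (hEC I hI).map_conj g
  restrict := by
    rintro K H L ⟨hO, hEC⟩ hLH
    refine ⟨O.restrict L hO hLH, fun I hI => ?_⟩
    rw [inf_assoc, inf_eq_right.2 hI]
    exact hEC I (hI.trans hLH)
  comp := by
    rintro L K H ⟨hOL, hECL⟩ ⟨hOK, hECK⟩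
    refine ⟨O.comp hOL hOK, fun I hI => ?_⟩
    have hLK := O.le_of_rel hOL
    have hECL' := hECL (K ⊓ I) inf_le_left
    rw [← inf_assoc, inf_eq_left.2 hLK] at hECL'
    exact hECL'.trans (inf_le_inf_right I hLK) (hECK I hI)

lemma compatible_maxCompatible (O : TransferSystem G) : O.Compatible O.maxCompatible := by
  refine ⟨fun K H h => h.1, fun K J H hJ ⟨hO, hEC⟩ hKJ => ?_⟩
  have hKH := hEC H le_rfl
  rw [inf_eq_left.2 (O.le_of_rel hO)] at hKH
  exact hKH J hJ hKJ

lemma IsMaxCompatible.rel_of_forall_edgeCompatible (hM : O.IsMaxCompatible M) {K H : Subgroup G}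
    (hKH : O.rel K H) (hEC : ∀ I ≤ H, O.EdgeCompatible (K ⊓ I) I) : M.rel K H :=
  hM.2 _ O.compatible_maxCompatible K H ⟨hKH, hEC⟩

lemma Disklike.exists_rel_inf_eq (hd : O.Disklike) {J I H : Subgroup G} (hJI : O.rel J I)
    (hIH : I ≤ H) : ∃ J' : Subgroup G, O.rel J' H ∧ J = J' ⊓ I := by
  obtain ⟨L, hL, rfl⟩ := hd J I hJI
  exact ⟨L ⊓ H, O.restrict H hL le_top, by rw [inf_assoc, inf_eq_right.2 hIH]⟩

variable [Finite G]

lemma rel_inf_of_lt {K H J : Subgroup G} (hcov : ∀ I, I ⋖ H → M.rel (K ⊓ I) I) (hJ : J < H) :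
    M.rel (K ⊓ J) J := by
  obtain ⟨I, hJI, hIH⟩ := exists_le_covBy_of_lt hJ
  have hKJ := M.restrict J (hcov I hIH) hJI
  rwa [inf_assoc, inf_eq_right.2 hJI] at hKJ

lemma edgeCompatible_of_forall_covBy (hd : O.Disklike) (hOM : O.Compatible M) {K H : Subgroup G}
    (hbelow : ∀ J < H, M.rel (K ⊓ J) J) (hsucc : ∀ I, I ⋖ H → O.rel (K ⊓ I) K → O.rel I H) : O.EdgeCompatible K H := by
  intro J hJH hJK
  rcases hJH.eq_or_lt with rfl | hJH
  · exact O.refl J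
  have rel_of_lt : ∀ J'', J ≤ J'' → J'' < H → O.rel J J'' := by
    intro J'' hJJ'' hJ''H
    refine (hOM.edgeCompatible (hbelow J'' hJ''H)) J hJJ'' ?_
    have hres := O.restrict (K ⊓ J'') hJK inf_le_left
    rw [inf_eq_left.2 (inf_le_inf_left K hJJ'')] at hres
    rwa [inf_right_comm, inf_assoc, inf_eq_left.2 hJJ'']
  obtain ⟨I, hJI, hIH⟩ := exists_le_covBy_of_lt hJH
  obtain ⟨J', hJ'H, hJ⟩ := hd.exists_rel_inf_eq (rel_of_lt I hJI hIH.lt) hIH.le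
  rcases (O.le_of_rel hJ'H).eq_or_lt with rfl | hJ'H'
  · rw [inf_eq_right.2 hIH.le] at hJ
    subst hJ
    exact hsucc J hIH hJK
  · exact O.comp (rel_of_lt J' (hJ ▸ inf_le_left) hJ'H') hJ'H

end TransferSystem

lemma restrCovBy_of_covBy {G : Type*} [Group G] (O : TransferSystem G) {K H I : Subgroup G}
    (hI : I ⋖ H) : RestrCovBy O (K ⊓ I, I) (K, H) := by
  refine ⟨⟨I, hI.lt, rfl⟩, ?_⟩
  rintro ⟨q, -, ⟨I₁, hI₁, hq⟩, ⟨I₂, hI₂, rfl⟩⟩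
  obtain rfl : I = I₁ := congrArg Prod.snd hq
  exact hI.2 hI₁ hI₂

/-- for a disklike `O`, a transfer `e = (K → H) ∈ O` belongs to
`M(O)` iff every transfer `r ∈ O` with `r ≺ e` in the restriction order belongs
to `M(O)` and is a compatibility success for `e`. -/
theorem stmt_11 {G : Type*} [Group G] [Finite G] (O M : TransferSystem G)
    (hd : O.Disklike) (hM : O.IsMaxCompatible M) (K H : Subgroup G) (hKH : O.rel K H) :
    M.rel K H ↔
      ∀ r : Subgroup G × Subgroup G, O.rel r.1 r.2 → RestrCovBy O r (K, H) →
        M.rel r.1 r.2 ∧ (O.rel r.1 K → O.rel r.2 H) := by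
  constructor
  · rintro hMKH r - ⟨⟨I, hI, rfl⟩, -⟩
    exact ⟨M.restrict I hMKH hI.le, hM.1.edgeCompatible hMKH I hI.le⟩
  · intro hr
    have hcov : ∀ I, I ⋖ H → M.rel (K ⊓ I) I ∧ (O.rel (K ⊓ I) K → O.rel I H) :=
      fun I hI => hr _ (O.restrict I hKH hI.le) (restrCovBy_of_covBy O hI)
    have hbelow : ∀ J < H, M.rel (K ⊓ J) J :=
      fun J => TransferSystem.rel_inf_of_lt fun I hI => (hcov I hI).1
    refine hM.rel_of_forall_edgeCompatible hKH fun I hIH => ?_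
    rcases hIH.eq_or_lt with rfl | hIH
    · rw [inf_eq_left.2 (O.le_of_rel hKH)]
      exact TransferSystem.edgeCompatible_of_forall_covBy hd hM.1 hbelow
        fun I hI => (hcov I hI).2
    · exact hM.1.edgeCompatible (hbelow I hIH)
end

section
/- Let G be a finite group, N a normal subgroup of G, p : G → G/N the quotient map, and O a transfer system on G/N. If O is saturated, then the inflation p*O is a saturated transfer system on G. -/
/-!
The inflation `p*O` has an explicit description: `A → B` iff `A ≤ B`, `N ∩ B ≤ A` and
`p(A) → p(B)` in `O`. Indeed these relations form a transfer system containing `p⁻¹O`, and each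
of them is the restriction to `B` of the generator `p⁻¹p(A) → p⁻¹p(B)`, since `AN ∩ B = A`.
In this description saturation is inherited from `O`: if `L ≤ K ≤ H` and `L → H`, then
`N ∩ H ≤ L ≤ K` and `p(L) ≤ p(K) ≤ p(H)`.
-/

open Subgroup
open scoped Pointwise

namespace Subgroup

variable {G Q : Type*} [Group G] [Group Q]

theorem sup_normal_inf_eq_of_inf_le {K H N : Subgroup G} [N.Normal] (hNH : N ⊓ H ≤ K)
    (hKH : K ≤ H) : (K ⊔ N) ⊓ H = K := by
  refine le_antisymm (fun x hx => ?_) (le_inf le_sup_left hKH)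
  have hx' : x ∈ (K : Set G) * ↑(N ⊓ H) := by
    rw [mul_inf_assoc K N H hKH, ← mul_normal]
    exact hx
  obtain ⟨k, hk, n, hn, rfl⟩ := hx'
  exact K.mul_mem hk (hNH hn)

theorem map_inf_of_ker_inf_le (f : G →* Q) {K H L : Subgroup G} (hker : f.ker ⊓ H ≤ K)
    (hKH : K ≤ H) (hLH : L ≤ H) : (K ⊓ L).map f = K.map f ⊓ L.map f := by
  refine le_antisymm (le_inf (map_mono inf_le_left) (map_mono inf_le_right)) ?_
  rintro _ ⟨⟨k, hk, rfl⟩, ⟨l, hl, hlk⟩⟩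
  have hlk' : l * k⁻¹ ∈ f.ker ⊓ H := by
    refine ⟨show l * k⁻¹ ∈ f.ker from ?_, H.mul_mem (hLH hl) (H.inv_mem (hKH hk))⟩
    rw [MonoidHom.mem_ker, map_mul, map_inv, hlk, mul_inv_cancel]
  refine ⟨l, ⟨?_, hl⟩, hlk⟩
  simpa using K.mul_mem (hker hlk') hk

theorem map_map_conj (f : G →* Q) (A : Subgroup G) (g : G) :
    (A.map (MulAut.conj g).toMonoidHom).map f =
      (A.map f).map (MulAut.conj (f g)).toMonoidHom := by
  simp only [map_map]
  congr 1
  ext x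
  simp

end Subgroup

namespace TransferSystem

variable {G Q : Type*} [Group G] [Group Q]

theorem IsGeneratedBy.rel_iff {T T' : TransferSystem G} {B : Subgroup G → Subgroup G → Prop}
    (hT : T.IsGeneratedBy B) (hT' : T'.IsGeneratedBy B) {K H : Subgroup G} :
    T.rel K H ↔ T'.rel K H :=
  ⟨hT.2 T' hT'.1 K H, hT'.2 T hT.1 K H⟩

def inflation (f : G →* Q) (O : TransferSystem Q) : TransferSystem G where
  rel A B := A ≤ B ∧ f.ker ⊓ B ≤ A ∧ O.rel (A.map f) (B.map f)
  le_of_rel h := h.1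
  refl H := ⟨le_rfl, inf_le_right, O.refl _⟩
  conj := by
    rintro K H g ⟨hKH, hker, hO⟩
    refine ⟨map_mono hKH, ?_, ?_⟩
    · calc f.ker ⊓ H.map (MulAut.conj g).toMonoidHom
          = (f.ker ⊓ H).map (MulAut.conj g).toMonoidHom := by
            rw [map_inf _ _ _ (MulAut.conj g).injective]
            exact congrArg (· ⊓ _) (Normal.map_conj_eq f.ker g).symm
        _ ≤ K.map (MulAut.conj g).toMonoidHom := map_mono hker
    · rw [map_map_conj, map_map_conj]
      exact O.conj _ hO
  restrict := by
    rintro K H L ⟨hKH, hker, hO⟩ hLH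
    refine ⟨inf_le_right, le_inf ((inf_le_inf_left _ hLH).trans hker) inf_le_right, ?_⟩
    rw [map_inf_of_ker_inf_le f hker hKH hLH]
    exact O.restrict _ hO (map_mono hLH)
  comp := by
    rintro L K H ⟨hLK, hkerL, hO⟩ ⟨hKH, hkerK, hO'⟩
    exact ⟨hLK.trans hKH, (le_inf inf_le_left hkerK).trans hkerL, O.comp hO hO'⟩

theorem inflation_isGeneratedBy {f : G →* Q} (hf : Function.Surjective f)
    (O : TransferSystem Q) :
    (inflation f O).IsGeneratedBy
      fun A B => ∃ K H : Subgroup Q, O.rel K H ∧ A = K.comap f ∧ B = H.comap f := by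
  refine ⟨?_, fun T hT => ?_⟩
  · rintro _ _ ⟨K, H, hO, rfl, rfl⟩
    refine ⟨comap_mono (O.le_of_rel hO), fun x hx => ?_, ?_⟩
    · simp [mem_comap, (MonoidHom.mem_ker).mp hx.1, K.one_mem]
    · rwa [map_comap_eq_self_of_surjective hf, map_comap_eq_self_of_surjective hf]
  · rintro K H ⟨hKH, hker, hO⟩
    have hgen : T.rel ((K.map f).comap f) ((H.map f).comap f) := hT _ _ ⟨_, _, hO, rfl, rfl⟩
    rw [comap_map_eq, comap_map_eq] at hgen
    simpa only [sup_normal_inf_eq_of_inf_le hker hKH] using T.restrict H hgen le_sup_left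

theorem Saturated.inflation {O : TransferSystem Q} (hO : O.Saturated) (f : G →* Q) :
    (inflation f O).Saturated := by
  rintro L K H hLK hKH ⟨-, hker, hLH⟩
  exact ⟨hKH, hker.trans hLK, hO _ _ _ (map_mono hLK) (map_mono hKH) hLH⟩

end TransferSystem

theorem stmt_15_general {G : Type*} [Group G] (N : Subgroup G) [N.Normal]
    (O : TransferSystem (G ⧸ N)) (P : TransferSystem G)
    (hP : P.IsGeneratedBy (preimageRel N O)) (hs : O.Saturated) :
    P.Saturated := by
  have hinfl : (TransferSystem.inflation (QuotientGroup.mk' N) O).IsGeneratedBy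
      (preimageRel N O) :=
    TransferSystem.inflation_isGeneratedBy (QuotientGroup.mk'_surjective N) O
  intro L K H hLK hKH hLH
  rw [hP.rel_iff hinfl] at hLH ⊢
  exact hs.inflation _ L K H hLK hKH hLH

/-- inflation preserves saturation. -/
theorem stmt_15 {G : Type*} [Group G] [Finite G] (N : Subgroup G) [N.Normal]
    (O : TransferSystem (G ⧸ N)) (P : TransferSystem G)
    (hP : P.IsGeneratedBy (preimageRel N O)) (hs : O.Saturated) :
    P.Saturated :=
  stmt_15_general N O P hP hs
end
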